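/- Let G = (V_L ∪ V_R, E) be a bipartite α-expander for some α ∈ (0,1) with maximum degree at most Δ ≥ 1, and let λ ∈ ℝ satisfy λ ≥ (e·Δ²/0.8)^{1/α}. Consider the left hard-core polymer model on G. Then for every vertex v ∈ V_L, ∑_{polymers S with v ∈ S} e^{0.2·|S|} · λ^{|S|}/(1+λ)^{|N_G(S)|} ≤ 1; that is, each clique Λ_v = {polymers S : v ∈ S} satisfies the clique truncation condition for g(x) = e^{0.2x} and bound B = 1. -/

import Mathlib

open scoped Classical

/-- `nbhd G S` is the set `N_G(S)` of all vertices adjacent to some vertex of `S`. -/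
noncomputable def nbhd {V : Type*} [Fintype V] (G : SimpleGraph V) (S : Finset V) :
    Finset V :=
  Finset.univ.filter fun v => ∃ u ∈ S, G.Adj u v

/-- `G` is bipartite with parts `VL` and `VR`. -/
def IsBipartition {V : Type*} [Fintype V] (G : SimpleGraph V) (VL VR : Finset V) : Prop :=
  Disjoint VL VR ∧ VL ∪ VR = Finset.univ ∧
    ∀ u v, G.Adj u v → (u ∈ VL ∧ v ∈ VR) ∨ (u ∈ VR ∧ v ∈ VL)

/-- `G` is a bipartite `α`-expander with parts `VL` and `VR`: every subset `S` of one
side with `|S| ≤ |V_i|/2` satisfies `|N_G(S)| ≥ (1+α)|S|`. -/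
def IsBipartiteExpander {V : Type*} [Fintype V] (G : SimpleGraph V) (VL VR : Finset V)
    (α : ℝ) : Prop :=
  IsBipartition G VL VR ∧
    (∀ S ⊆ VL, (S.card : ℝ) ≤ (VL.card : ℝ) / 2 →
      (1 + α) * (S.card : ℝ) ≤ ((nbhd G S).card : ℝ)) ∧
    (∀ S ⊆ VR, (S.card : ℝ) ≤ (VR.card : ℝ) / 2 →
      (1 + α) * (S.card : ℝ) ≤ ((nbhd G S).card : ℝ))

/-- The square `G²` of a graph: two distinct vertices are adjacent iff their distance
in `G` is at most `2`. -/
def graphSquare {V : Type*} (G : SimpleGraph V) : SimpleGraph V where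
  Adj u v := u ≠ v ∧ (G.Adj u v ∨ ∃ w, G.Adj u w ∧ G.Adj w v)
  symm := ⟨by
    intro u v h
    refine ⟨h.1.symm, ?_⟩
    rcases h.2 with h' | ⟨w, hw1, hw2⟩
    · exact Or.inl h'.symm
    · exact Or.inr ⟨w, hw2.symm, hw1.symm⟩⟩
  loopless := ⟨fun u h => h.1 rfl⟩

/-- A polymer of the left hard-core polymer model: a nonempty subset of `VL` with
`|S| ≤ |VL|/2` inducing a connected subgraph of `G²`. -/
def IsHCPolymer {V : Type*} [Fintype V] (G : SimpleGraph V) (VL : Finset V)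
    (S : Finset V) : Prop :=
  S.Nonempty ∧ S ⊆ VL ∧ (S.card : ℝ) ≤ (VL.card : ℝ) / 2 ∧
    ((graphSquare G).induce (↑S : Set V)).Connected

/-- The weight `w_S = λ^{|S|}/(1+λ)^{|N_G(S)|}` of a polymer `S`. -/
noncomputable def hcWeight {V : Type*} [Fintype V] (G : SimpleGraph V) (lam : ℝ)
    (S : Finset V) : ℝ :=
  lam ^ S.card / (1 + lam) ^ (nbhd G S).card

/-- Two polymers are incompatible iff some vertex of one is at distance at most `2`
in `G` from some vertex of the other. -/
def HCIncomp {V : Type*} (G : SimpleGraph V) (S S' : Finset V) : Prop :=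
  ∃ u ∈ S, ∃ v ∈ S', u = v ∨ (graphSquare G).Adj u v

/-! The expansion `|N(S)| ≥ (1 + α)|S|` together with `λ^α ≥ eΔ²/0.8` bounds each term
`e^{0.2|S|} w_S` by `x^{|S|}` with `x = 0.8 e^{-0.8}/Δ²`. Polymers through `v` are connected sets
through `v` in `G²`, a graph of maximum degree at most `Δ²`. Removing `v` from such a set leaves
branches, each a connected set through a neighbour of `v`; hence their weighted count obeys a tree
recursion and is at most any `T` with `x (1 + T)^{Δ²} ≤ T`. Since `(1 + T)^{Δ²} ≤ e^{0.8}` for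
`T = 0.8/Δ²`, this `T` works, and it is at most `1`. -/

namespace SimpleGraph

variable {V : Type*} (H : SimpleGraph V)

def ReachIn (S : Finset V) : V → V → Prop :=
  Relation.ReflTransGen fun a b => H.Adj a b ∧ a ∈ S ∧ b ∈ S

def IsConnectedIn (S : Finset V) : Prop :=
  ∀ a ∈ S, ∀ b ∈ S, H.ReachIn S a b

noncomputable def componentIn (S : Finset V) (w : V) : Finset V :=
  S.filter (H.ReachIn S w)

variable {H}

namespace ReachIn

variable {S : Finset V} {a b c : V}

lemma symm (h : H.ReachIn S a b) : H.ReachIn S b a := by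
  induction h with
  | refl => exact .refl
  | tail _ hbc ih => exact Relation.ReflTransGen.head ⟨hbc.1.symm, hbc.2.2, hbc.2.1⟩ ih

lemma trans (h : H.ReachIn S a b) (h' : H.ReachIn S b c) : H.ReachIn S a c :=
  Relation.ReflTransGen.trans h h'

lemma of_walk {a b : (S : Set V)} (p : (H.induce (S : Set V)).Walk a b) :
    H.ReachIn S a b := by
  induction p with
  | nil => exact .refl
  | @cons c d _ hcd _ ih => exact .head ⟨hcd, c.2, d.2⟩ ih

lemma to_componentIn (h : H.ReachIn S a b) : H.ReachIn (H.componentIn S a) a b := by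
  induction h with
  | refl => exact .refl
  | tail hab hbc ih =>
    exact ih.tail ⟨hbc.1, Finset.mem_filter.2 ⟨hbc.2.1, hab⟩,
      Finset.mem_filter.2 ⟨hbc.2.2, hab.tail hbc⟩⟩

end ReachIn

lemma isConnectedIn_of_connected_induce {S : Finset V}
    (h : (H.induce (S : Set V)).Connected) : H.IsConnectedIn S := fun a ha b hb =>
  let ⟨p⟩ := h.preconnected ⟨a, ha⟩ ⟨b, hb⟩
  ReachIn.of_walk p

section componentIn

variable {S : Finset V} {w y : V}

lemma mem_componentIn : y ∈ H.componentIn S w ↔ y ∈ S ∧ H.ReachIn S w y :=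
  Finset.mem_filter

lemma componentIn_subset : H.componentIn S w ⊆ S :=
  Finset.filter_subset _ _

lemma mem_componentIn_self (hw : w ∈ S) : w ∈ H.componentIn S w :=
  mem_componentIn.2 ⟨hw, .refl⟩

lemma componentIn_eq_of_reachIn (h : H.ReachIn S w y) :
    H.componentIn S w = H.componentIn S y := by
  ext z
  simp only [mem_componentIn]
  exact and_congr_right fun _ => ⟨h.symm.trans, h.trans⟩

lemma isConnectedIn_componentIn : H.IsConnectedIn (H.componentIn S w) := by
  intro a ha b hb
  exact (mem_componentIn.1 ha).2.to_componentIn.symm.trans (mem_componentIn.1 hb).2.to_componentIn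

end componentIn

lemma exists_adj_mem_componentIn_erase [DecidableEq V] {S : Finset V} {u a : V}
    (hS : H.IsConnectedIn S) (hu : u ∈ S) (ha : a ∈ S.erase u) :
    ∃ b ∈ H.componentIn (S.erase u) a, H.Adj u b := by
  induction hS a (Finset.mem_of_mem_erase ha) u hu
    using Relation.ReflTransGen.head_induction_on with
  | refl => exact absurd rfl (Finset.ne_of_mem_erase ha)
  | @head p c hpc _ ih =>
    by_cases hc : c = u
    · exact ⟨p, mem_componentIn_self ha, hc ▸ hpc.1.symm⟩
    · have hc' : c ∈ S.erase u := Finset.mem_erase.2 ⟨hc, hpc.2.2⟩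
      obtain ⟨b, hb, hub⟩ := ih hc'
      rw [← componentIn_eq_of_reachIn (.single ⟨hpc.1, ha, hc'⟩)] at hb
      exact ⟨b, hb, hub⟩

variable [Fintype V]

variable (H) in
noncomputable def connectedSetsThrough (u : V) (k : ℕ) : Finset (Finset V) :=
  Finset.univ.filter fun S => u ∈ S ∧ H.IsConnectedIn S ∧ S.card ≤ k

lemma mem_connectedSetsThrough {u : V} {k : ℕ} {S : Finset V} :
    S ∈ H.connectedSetsThrough u k ↔ u ∈ S ∧ H.IsConnectedIn S ∧ S.card ≤ k := by
  simp [connectedSetsThrough]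

section Branch

variable [LinearOrder V]

variable (H) in
/-- Indexing each component of `S \ {u}` by its least neighbour of `u` lists every component
exactly once, so `S` is recovered from `u` and its branches. -/
noncomputable def branch (u : V) (S : Finset V) (w : V) : Finset V :=
  if H.Adj u w ∧ w ∈ S.erase u ∧ ∀ y ∈ H.componentIn (S.erase u) w, H.Adj u y → w ≤ y
  then H.componentIn (S.erase u) w else ∅

variable {u : V} {S : Finset V}

lemma branch_subset (w : V) : H.branch u S w ⊆ S.erase u := by
  unfold branch
  split
  · exact componentIn_subset
  · exact Finset.empty_subset _

lemma branch_eq_empty_of_not_adj {w : V} (hw : ¬ H.Adj u w) : H.branch u S w = ∅ :=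
  if_neg fun h => hw h.1

lemma disjoint_branch {w w' : V} (hne : w ≠ w') :
    Disjoint (H.branch u S w) (H.branch u S w') := by
  unfold branch
  split_ifs with hw hw'
  · refine Finset.disjoint_left.2 fun y hy hy' => hne ?_
    have hww' := (mem_componentIn.1 hy).2.trans (mem_componentIn.1 hy').2.symm
    exact le_antisymm (hw.2.2 w' (mem_componentIn.2 ⟨hw'.2.1, hww'⟩) hw'.1)
      (hw'.2.2 w (mem_componentIn.2 ⟨hw.2.1, hww'.symm⟩) hw.1)
  all_goals simp

lemma biUnion_branch (hS : H.IsConnectedIn S) (hu : u ∈ S) :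
    Finset.univ.biUnion (H.branch u S) = S.erase u := by
  refine subset_antisymm (Finset.biUnion_subset.2 fun w _ => branch_subset w) fun a ha => ?_
  obtain ⟨b, hb, hub⟩ := exists_adj_mem_componentIn_erase hS hu ha
  have hne : {y ∈ H.componentIn (S.erase u) a | H.Adj u y}.Nonempty := ⟨b, by simp [hb, hub]⟩
  set w := Finset.min' _ hne
  obtain ⟨hwa, huw⟩ := Finset.mem_filter.1 (Finset.min'_mem _ hne)
  have hcomp : H.componentIn (S.erase u) w = H.componentIn (S.erase u) a :=
    (componentIn_eq_of_reachIn (mem_componentIn.1 hwa).2).symm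
  have hbranch : H.branch u S w = H.componentIn (S.erase u) a := by
    rw [branch, if_pos, hcomp]
    refine ⟨huw, (mem_componentIn.1 hwa).1, fun y hy huy => ?_⟩
    exact Finset.min'_le _ _ (Finset.mem_filter.2 ⟨hcomp ▸ hy, huy⟩)
  exact Finset.mem_biUnion.2 ⟨w, Finset.mem_univ _, hbranch ▸ mem_componentIn_self ha⟩

lemma insert_biUnion_branch (hS : H.IsConnectedIn S) (hu : u ∈ S) :
    insert u (Finset.univ.biUnion (H.branch u S)) = S := by
  rw [biUnion_branch hS hu, Finset.insert_erase hu]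

lemma card_eq_one_add_sum_card_branch (hS : H.IsConnectedIn S) (hu : u ∈ S) :
    S.card = 1 + ∑ w, (H.branch u S w).card := by
  rw [← Finset.card_biUnion fun w _ w' _ => disjoint_branch, biUnion_branch hS hu,
    Finset.card_erase_of_mem hu]
  have := Finset.card_pos.2 ⟨u, hu⟩
  omega

lemma branch_mem_connectedSetsThrough {k : ℕ} {w : V} (hu : u ∈ S) (hS : S.card ≤ k + 1)
    (hw : (H.branch u S w).Nonempty) : H.branch u S w ∈ H.connectedSetsThrough w k := by
  have hcard : (H.branch u S w).card ≤ k := by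
    have := (Finset.card_le_card (branch_subset (H := H) (u := u) (S := S) w)).trans_eq
      (Finset.card_erase_of_mem hu)
    omega
  unfold branch at hw hcard ⊢
  split_ifs at hw hcard ⊢ with h
  · exact mem_connectedSetsThrough.2 ⟨mem_componentIn_self h.2.1, isConnectedIn_componentIn, hcard⟩
  · simp at hw

lemma branch_mem_piFinset {k : ℕ} (hS : S ∈ H.connectedSetsThrough u (k + 1)) :
    H.branch u S ∈ Fintype.piFinset fun w =>
      if H.Adj u w then insert ∅ (H.connectedSetsThrough w k) else {∅} := by
  obtain ⟨hu, -, hcard⟩ := mem_connectedSetsThrough.1 hS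
  refine Fintype.mem_piFinset.2 fun w => ?_
  by_cases huw : H.Adj u w
  · simp only [if_pos huw]
    obtain hw | hw := (H.branch u S w).eq_empty_or_nonempty
    · exact hw ▸ Finset.mem_insert_self _ _
    · exact Finset.mem_insert_of_mem (branch_mem_connectedSetsThrough hu hcard hw)
  · simp [huw, branch_eq_empty_of_not_adj huw]

variable (u) in
lemma injOn_branch (k : ℕ) : Set.InjOn (H.branch u) (H.connectedSetsThrough u k) := by
  intro S hS S' hS' h
  obtain ⟨hu, hconn, -⟩ := mem_connectedSetsThrough.1 hS
  obtain ⟨hu', hconn', -⟩ := mem_connectedSetsThrough.1 hS'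
  rw [← insert_biUnion_branch hconn hu, ← insert_biUnion_branch hconn' hu', h]

end Branch

lemma empty_notMem_connectedSetsThrough (u : V) (k : ℕ) :
    ∅ ∉ H.connectedSetsThrough u k := fun h =>
  Finset.notMem_empty u (mem_connectedSetsThrough.1 h).1

lemma sum_connectedSetsThrough_succ_le {x : ℝ} (hx : 0 ≤ x) (u : V) (k : ℕ) :
    ∑ S ∈ H.connectedSetsThrough u (k + 1), x ^ S.card ≤
      x * ∏ w ∈ H.neighborFinset u, (1 + ∑ S ∈ H.connectedSetsThrough w k, x ^ S.card) := by
  -- any linear order on `V` serves to define the branches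
  let _ : LinearOrder V := LinearOrder.lift' _ (Fintype.equivFin V).injective
  set C := H.connectedSetsThrough u (k + 1)
  set t : V → Finset (Finset V) := fun w =>
    if H.Adj u w then insert ∅ (H.connectedSetsThrough w k) else {∅}
  have hfactor : ∀ w, ∑ A ∈ t w, x ^ A.card =
      if H.Adj u w then 1 + ∑ S ∈ H.connectedSetsThrough w k, x ^ S.card else 1 := by
    intro w
    split_ifs with huw
    · simp [t, huw, Finset.sum_insert (empty_notMem_connectedSetsThrough w k)]
    · simp [t, huw]
  calc ∑ S ∈ C, x ^ S.card
      = ∑ S ∈ C, x * ∏ w, x ^ (H.branch u S w).card := by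
        refine Finset.sum_congr rfl fun S hS => ?_
        obtain ⟨hu, hconn, -⟩ := mem_connectedSetsThrough.1 hS
        rw [Finset.prod_pow_eq_pow_sum, card_eq_one_add_sum_card_branch hconn hu, pow_add,
          pow_one]
    _ = x * ∑ f ∈ C.image (H.branch u), ∏ w, x ^ (f w).card := by
        rw [Finset.sum_image (injOn_branch u _), Finset.mul_sum]
    _ ≤ x * ∑ f ∈ Fintype.piFinset t, ∏ w, x ^ (f w).card := by
        gcongr
        exact Finset.image_subset_iff.2 fun S => branch_mem_piFinset
    _ = x * ∏ w ∈ H.neighborFinset u, (1 + ∑ S ∈ H.connectedSetsThrough w k, x ^ S.card) := by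
        rw [← Finset.prod_univ_sum t fun _ A => x ^ A.card, neighborFinset_eq_filter,
          Finset.prod_filter]
        simp only [hfactor]

theorem sum_connectedSetsThrough_le {D : ℕ} (hdeg : ∀ u, (H.neighborFinset u).card ≤ D)
    {x T : ℝ} (hx : 0 ≤ x) (hT : 0 ≤ T) (hfix : x * (1 + T) ^ D ≤ T) (k : ℕ) (u : V) :
    ∑ S ∈ H.connectedSetsThrough u k, x ^ S.card ≤ T := by
  induction k generalizing u with
  | zero =>
    rwa [Finset.sum_eq_zero fun S hS => ?_]
    obtain ⟨hu, -, hcard⟩ := mem_connectedSetsThrough.1 hS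
    exact absurd (Finset.card_pos.2 ⟨u, hu⟩) (by omega)
  | succ k ih =>
    calc ∑ S ∈ H.connectedSetsThrough u (k + 1), x ^ S.card
        ≤ x * ∏ w ∈ H.neighborFinset u, (1 + ∑ S ∈ H.connectedSetsThrough w k, x ^ S.card) :=
          sum_connectedSetsThrough_succ_le hx u k
      _ ≤ x * ∏ _w ∈ H.neighborFinset u, (1 + T) := by
          gcongr with w
          exact ih w
      _ ≤ x * (1 + T) ^ D := by
          rw [Finset.prod_const]
          gcongr
          · linarith
          · exact hdeg u
      _ ≤ T := hfix

end SimpleGraph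

lemma nbhd_singleton {V : Type*} [Fintype V] (G : SimpleGraph V) (v : V) :
    nbhd G {v} = G.neighborFinset v := by
  ext w
  simp [nbhd]

lemma card_neighborFinset_graphSquare_le {V : Type*} [Fintype V] (G : SimpleGraph V) {Δ : ℕ}
    (hdeg : ∀ v, (G.neighborFinset v).card ≤ Δ) (u : V) :
    ((graphSquare G).neighborFinset u).card ≤ Δ ^ 2 := by
  have hsub : (graphSquare G).neighborFinset u ⊆
      (G.neighborFinset u).biUnion fun w => insert w ((G.neighborFinset w).erase u) := by
    intro y hy
    obtain ⟨hne, huy | ⟨w, huw, hwy⟩⟩ := (SimpleGraph.mem_neighborFinset _ _ _).1 hy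
    · exact Finset.mem_biUnion.2 ⟨y, by simpa using huy, Finset.mem_insert_self _ _⟩
    · exact Finset.mem_biUnion.2 ⟨w, by simpa using huw, by simp [hne.symm, hwy]⟩
  calc ((graphSquare G).neighborFinset u).card
      ≤ ∑ w ∈ G.neighborFinset u, (insert w ((G.neighborFinset w).erase u)).card :=
        (Finset.card_le_card hsub).trans Finset.card_biUnion_le
    _ ≤ ∑ _w ∈ G.neighborFinset u, Δ := by
        refine Finset.sum_le_sum fun w hw => ?_
        have hu : u ∈ G.neighborFinset w := by simpa [SimpleGraph.adj_comm] using hw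
        have := Finset.card_insert_le w ((G.neighborFinset w).erase u)
        rw [Finset.card_erase_of_mem hu] at this
        have := Finset.card_pos.2 ⟨u, hu⟩
        have := hdeg w
        omega
    _ ≤ Δ ^ 2 := by
        rw [Finset.sum_const, smul_eq_mul, sq]
        exact Nat.mul_le_mul_right _ (hdeg u)

lemma pow_div_one_add_pow_le {lam α : ℝ} (hlam : 0 < lam) (hα : 0 ≤ α) {k n : ℕ}
    (hn : (1 + α) * k ≤ n) : lam ^ k / (1 + lam) ^ n ≤ (lam ^ α)⁻¹ ^ k := by
  have hden : lam ^ ((1 + α) * k) ≤ (1 + lam) ^ (n : ℝ) :=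
    (Real.rpow_le_rpow hlam.le (by linarith) (by positivity)).trans
      (Real.rpow_le_rpow_of_exponent_le (by linarith) hn)
  calc lam ^ k / (1 + lam) ^ n = lam ^ (k : ℝ) / (1 + lam) ^ (n : ℝ) := by
        rw [Real.rpow_natCast, Real.rpow_natCast]
    _ ≤ lam ^ (k : ℝ) / lam ^ ((1 + α) * k) := by gcongr
    _ = (lam ^ α)⁻¹ ^ k := by
        rw [← Real.rpow_sub hlam, inv_pow, ← Real.rpow_natCast, ← Real.rpow_mul hlam.le,
          ← Real.rpow_neg (by positivity)]
        ring_nf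

lemma mul_exp_neg_mul_one_add_div_pow_le {c : ℝ} (hc : 0 ≤ c) (D : ℕ) :
    c / D * Real.exp (-c) * (1 + c / D) ^ D ≤ c / D := by
  have h : (1 + c / D) ^ D ≤ Real.exp c := by
    simpa [neg_div, sub_neg_eq_add] using
      Real.one_sub_div_pow_le_exp_neg (n := D) (t := -c) (by linarith [D.cast_nonneg (α := ℝ)])
  calc c / D * Real.exp (-c) * (1 + c / D) ^ D ≤ c / D * Real.exp (-c) * Real.exp c := by
        gcongr
    _ = c / D := by rw [mul_assoc, ← Real.exp_add, neg_add_cancel, Real.exp_zero, mul_one]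

lemma exp_mul_hcWeight_le {V : Type*} [Fintype V] (G : SimpleGraph V) {α lam : ℝ}
    (hα : 0 ≤ α) (hlam : 0 < lam) (c : ℝ) {S : Finset V}
    (hS : (1 + α) * (S.card : ℝ) ≤ ((nbhd G S).card : ℝ)) :
    Real.exp (c * S.card) * hcWeight G lam S ≤ (Real.exp c / lam ^ α) ^ S.card := by
  calc Real.exp (c * S.card) * hcWeight G lam S
      ≤ Real.exp c ^ S.card * (lam ^ α)⁻¹ ^ S.card := by
        rw [mul_comm c, Real.exp_nat_mul]
        exact mul_le_mul_of_nonneg_left (pow_div_one_add_pow_le hlam hα hS) (by positivity)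
    _ = (Real.exp c / lam ^ α) ^ S.card := by rw [← mul_pow, div_eq_mul_inv]

lemma exp_mul_hcWeight_le_of_expander {V : Type*} [Fintype V] {G : SimpleGraph V}
    {VL VR : Finset V} {α : ℝ} (hα : 0 < α) (hexp : IsBipartiteExpander G VL VR α) {Δ : ℕ}
    (hΔ : 1 ≤ Δ) {lam : ℝ} (hlam : (Real.exp 1 * (Δ : ℝ) ^ 2 / 0.8) ^ (α⁻¹) ≤ lam)
    {S : Finset V} (hS : IsHCPolymer G VL S) :
    Real.exp (0.2 * (S.card : ℝ)) * hcWeight G lam S ≤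
      (0.8 / ((Δ ^ 2 : ℕ) : ℝ) * Real.exp (-0.8)) ^ S.card := by
  have hΔ' : (1 : ℝ) ≤ Δ := by exact_mod_cast hΔ
  set b : ℝ := Real.exp 1 * (Δ : ℝ) ^ 2 / 0.8 with hb_def
  have hb : 1 ≤ b := by
    rw [le_div_iff₀ (by norm_num)]
    nlinarith [Real.add_one_le_exp 1]
  have hlam1 : 1 ≤ lam := (Real.one_le_rpow hb (inv_nonneg.2 hα.le)).trans hlam
  have hblam : b ≤ lam ^ α :=
    (Real.rpow_inv_le_iff_of_pos (by positivity) (by positivity) hα).1 hlam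
  have hx : Real.exp 0.2 / b = 0.8 / ((Δ ^ 2 : ℕ) : ℝ) * Real.exp (-0.8) := by
    rw [show (0.2 : ℝ) = 1 + -0.8 by norm_num, Real.exp_add, hb_def]
    push_cast
    field_simp
  obtain ⟨-, hSL, hShalf, -⟩ := hS
  refine (exp_mul_hcWeight_le G hα.le (by linarith) _ (hexp.2.1 S hSL hShalf)).trans ?_
  rw [← hx]
  gcongr

lemma polymers_subset_connectedSetsThrough {V : Type*} [Fintype V] (G : SimpleGraph V)
    (VL : Finset V) (v : V) :
    Finset.univ.filter (fun S => IsHCPolymer G VL S ∧ v ∈ S) ⊆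
      (graphSquare G).connectedSetsThrough v (Fintype.card V) := by
  intro S hS
  obtain ⟨⟨-, -, -, hconn⟩, hvS⟩ := (Finset.mem_filter.1 hS).2
  exact SimpleGraph.mem_connectedSetsThrough.2
    ⟨hvS, SimpleGraph.isConnectedIn_of_connected_induce hconn, Finset.card_le_univ S⟩

theorem hardcore_clique_truncation_condition_general {V : Type*} [Fintype V] (G : SimpleGraph V)
    (VL VR : Finset V) (α : ℝ) (hα : α ∈ Set.Ioo (0 : ℝ) 1)
    (hexp : IsBipartiteExpander G VL VR α)
    (Δ : ℕ) (hΔ : 1 ≤ Δ) (hdeg : ∀ v : V, (nbhd G {v}).card ≤ Δ)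
    (lam : ℝ) (hlam : (Real.exp 1 * (Δ : ℝ) ^ 2 / 0.8) ^ (α⁻¹) ≤ lam)
    (v : V) :
    (∑ S ∈ Finset.univ.filter fun S => IsHCPolymer G VL S ∧ v ∈ S,
        Real.exp (0.2 * (S.card : ℝ)) * hcWeight G lam S) ≤ 1 := by
  set x : ℝ := 0.8 / ((Δ ^ 2 : ℕ) : ℝ) * Real.exp (-0.8)
  calc _ ≤ ∑ S ∈ Finset.univ.filter fun S => IsHCPolymer G VL S ∧ v ∈ S, x ^ S.card :=
        Finset.sum_le_sum fun S hS =>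
          exp_mul_hcWeight_le_of_expander hα.1 hexp hΔ hlam (Finset.mem_filter.1 hS).2.1
    _ ≤ ∑ S ∈ (graphSquare G).connectedSetsThrough v (Fintype.card V), x ^ S.card :=
        Finset.sum_le_sum_of_subset_of_nonneg (polymers_subset_connectedSetsThrough G VL v)
          fun _ _ _ => by positivity
    _ ≤ 0.8 / ((Δ ^ 2 : ℕ) : ℝ) :=
        SimpleGraph.sum_connectedSetsThrough_le
          (card_neighborFinset_graphSquare_le G fun w => nbhd_singleton G w ▸ hdeg w)
          (by positivity) (by positivity) (mul_exp_neg_mul_one_add_div_pow_le (by norm_num) _) _ v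
    _ ≤ 1 := by
        rw [div_le_one (by positivity)]
        have : (1 : ℝ) ≤ ((Δ ^ 2 : ℕ) : ℝ) := by exact_mod_cast Nat.one_le_pow _ _ hΔ
        linarith

/-- For the left hard-core polymer model on a bipartite `α`-expander
of maximum degree at most `Δ` with `λ ≥ (eΔ²/0.8)^{1/α}`, every clique
`Λ_v = {S : v ∈ S}` satisfies the clique truncation condition for `g(x) = e^{0.2x}`
and `B = 1`: for every `v ∈ V_L`, `∑_{S ∋ v} e^{0.2|S|} w_S ≤ 1`. -/
theorem hardcore_clique_truncation_condition {V : Type*} [Fintype V] (G : SimpleGraph V)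
    (VL VR : Finset V) (α : ℝ) (hα : α ∈ Set.Ioo (0 : ℝ) 1)
    (hexp : IsBipartiteExpander G VL VR α)
    (Δ : ℕ) (hΔ : 1 ≤ Δ) (hdeg : ∀ v : V, (nbhd G {v}).card ≤ Δ)
    (lam : ℝ) (hlam : (Real.exp 1 * (Δ : ℝ) ^ 2 / 0.8) ^ (α⁻¹) ≤ lam)
    (v : V) (hv : v ∈ VL) :
    (∑ S ∈ Finset.univ.filter fun S => IsHCPolymer G VL S ∧ v ∈ S,
        Real.exp (0.2 * (S.card : ℝ)) * hcWeight G lam S) ≤ 1 :=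
  hardcore_clique_truncation_condition_general G VL VR α hα hexp Δ hΔ hdeg lam hlam v
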